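/- The group Γ_V(2) admits the presentation ⟨v, t | v⁴ = 1, v²·t·v⁻²·t⁻¹ = 1⟩; more precisely, the group homomorphism from the presented group on two generators v, t with relators v⁴ and v²tv⁻²t⁻¹ to Γ_V(2), determined by sending v to V = [[0,-1],[1,0]] and t to T = [[1,2],[0,1]], is a group isomorphism. -/

import Mathlib

/-- `SL(2, ℤ)`: the group of 2×2 integer matrices of determinant 1. -/
abbrev SL2Z := Matrix.SpecialLinearGroup (Fin 2) ℤ

private lemma even_iff_cast (d : ℤ) : Even d ↔ ((d : ZMod 2) = 0) := by
  rw [even_iff_two_dvd, ZMod.intCast_zmod_eq_zero_iff_dvd]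
  norm_num

private lemma key_mul : ∀ a a' b1 b2 b3 b4 : ZMod 2, a*a' = 0 → b1*b2 = 0 → b3*b4 = 0 →
    (a*b1 + a'*b3) * (a*b2 + a'*b4) = 0 := by decide

private lemma key_inv : ∀ a b c d : ZMod 2, a*d - b*c = 1 → a*b = 0 → c*d = 0 →
    d*(-b) = 0 ∧ (-c)*a = 0 := by decide

/-- `Γ_V(2)`: the subgroup of `SL(2,ℤ)` consisting of the matrices `[[d₁,d₂],[d₃,d₄]]`
with both products `d₁·d₂` and `d₃·d₄` even. -/
def GammaV2 : Subgroup SL2Z where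
  carrier := {A : SL2Z |
    Even ((A : Matrix (Fin 2) (Fin 2) ℤ) 0 0 * (A : Matrix (Fin 2) (Fin 2) ℤ) 0 1) ∧
    Even ((A : Matrix (Fin 2) (Fin 2) ℤ) 1 0 * (A : Matrix (Fin 2) (Fin 2) ℤ) 1 1)}
  one_mem' := by
    constructor <;> simp [Matrix.SpecialLinearGroup.coe_one]
  mul_mem' := by
    rintro A B ⟨hA1, hA2⟩ ⟨hB1, hB2⟩
    rw [even_iff_cast] at hA1 hA2 hB1 hB2
    push_cast at hA1 hA2 hB1 hB2
    constructor
    · rw [even_iff_cast]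
      simp only [Matrix.SpecialLinearGroup.coe_mul, Matrix.mul_apply, Fin.sum_univ_two]
      push_cast
      exact key_mul _ _ _ _ _ _ hA1 hB1 hB2
    · rw [even_iff_cast]
      simp only [Matrix.SpecialLinearGroup.coe_mul, Matrix.mul_apply, Fin.sum_univ_two]
      push_cast
      exact key_mul _ _ _ _ _ _ hA2 hB1 hB2
  inv_mem' := by
    rintro A ⟨hA1, hA2⟩
    rw [even_iff_cast] at hA1 hA2
    push_cast at hA1 hA2
    have hdet : (A : Matrix (Fin 2) (Fin 2) ℤ).det = 1 := A.prop
    rw [Matrix.det_fin_two] at hdet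
    have hdet2 : ((A : Matrix (Fin 2) (Fin 2) ℤ) 0 0 : ZMod 2) * ((A : Matrix (Fin 2) (Fin 2) ℤ) 1 1 : ZMod 2)
        - ((A : Matrix (Fin 2) (Fin 2) ℤ) 0 1 : ZMod 2) * ((A : Matrix (Fin 2) (Fin 2) ℤ) 1 0 : ZMod 2) = 1 := by
      have h := congrArg (fun z : ℤ => (z : ZMod 2)) hdet
      push_cast at h
      exact h
    obtain ⟨h1, h2⟩ := key_inv _ _ _ _ hdet2 hA1 hA2
    rw [Matrix.SpecialLinearGroup.SL2_inv_expl A]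
    constructor
    · rw [even_iff_cast]
      show ((((A : Matrix (Fin 2) (Fin 2) ℤ) 1 1) * (-(A : Matrix (Fin 2) (Fin 2) ℤ) 0 1) : ℤ) : ZMod 2) = 0
      push_cast
      exact h1
    · rw [even_iff_cast]
      show (((-(A : Matrix (Fin 2) (Fin 2) ℤ) 1 0) * ((A : Matrix (Fin 2) (Fin 2) ℤ) 0 0) : ℤ) : ZMod 2) = 0
      push_cast
      exact h2

/-- `V = [[0,-1],[1,0]]` as an element of `SL(2,ℤ)`. -/
def V : SL2Z := ⟨!![0, -1; 1, 0], by norm_num [Matrix.det_fin_two_of]⟩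

/-- `T = [[1,2],[0,1]]` as an element of `SL(2,ℤ)`. -/
def T : SL2Z := ⟨!![1, 2; 0, 1], by norm_num [Matrix.det_fin_two_of]⟩

lemma V_mem : V ∈ GammaV2 := by constructor <;> simp [V]

lemma T_mem : T ∈ GammaV2 := by constructor <;> simp [T]

/-- The relators `v⁴` and `v²·t·v⁻²·t⁻¹` in the free group on two generators
`v = FreeGroup.of 0` and `t = FreeGroup.of 1`. -/
def gammaRels : Set (FreeGroup (Fin 2)) :=
  {(FreeGroup.of 0) ^ 4,
   (FreeGroup.of 0) ^ 2 * FreeGroup.of 1 * ((FreeGroup.of 0) ^ 2)⁻¹ * (FreeGroup.of 1)⁻¹}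

/-!
`Γ_V(2)` is generated by `V` and `T`: the entries `a, c` of the first column of a matrix in
`Γ_V(2)` have odd sum, so left multiplication by `V T^k` replaces `c` by `a + 2kc`, which for a
suitable `k` is smaller than `c` in absolute value; when `c = 0` the matrix is `±T^m`.

For injectivity, `v²` is central in the presented group `P`, and the map `P → ℤ/2 ∗ ℤ`
sending `v, t` to the generators of the free factors has kernel `⟨v²⟩`: followed by the evident
map `ℤ/2 ∗ ℤ → P / ⟨v²⟩` it is the quotient map. The Möbius actions of `V` and `T` on the upper
half plane play ping-pong with the inside and the outside of the unit circle, so `ℤ/2 ∗ ℤ` acts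
faithfully on it through `V` and `T`. Hence the kernel of `P → Γ_V(2)` lies in
`⟨v²⟩ = {1, v²}`, and `v²` maps to `V² = -1 ≠ 1`.
-/

open Monoid (CoprodI)
open scoped Pointwise UpperHalfPlane

def zmodPowersHom {G : Type*} [Group G] (n : ℕ) (g : G) (hg : g ^ n = 1) :
    Multiplicative (ZMod n) →* G :=
  AddMonoidHom.toMultiplicativeLeft <| ZMod.lift n
    ⟨zmultiplesHom (Additive G) (Additive.ofMul g), by
      simpa [← ofMul_pow] using congrArg Additive.ofMul hg⟩

lemma zmodPowersHom_ofAdd_intCast {G : Type*} [Group G] {n : ℕ} {g : G} (hg : g ^ n = 1)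
    (k : ℤ) : zmodPowersHom n g hg (.ofAdd (k : ZMod n)) = g ^ k := by
  simp [zmodPowersHom]

/-- Order `n i = 0` gives an infinite cyclic factor, as `ZMod 0 = ℤ`. -/
abbrev CyclicFreeProduct {ι : Type*} (n : ι → ℕ) : Type _ :=
  CoprodI fun i => Multiplicative (ZMod (n i))

namespace CyclicFreeProduct

variable {ι : Type*} {n : ι → ℕ}

def gen (i : ι) : CyclicFreeProduct n := CoprodI.of (i := i) (Multiplicative.ofAdd 1)

lemma gen_pow_eq_one (i : ι) : gen (n := n) i ^ n i = 1 := by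
  rw [gen, ← map_pow, ← ofAdd_nsmul, nsmul_one, ZMod.natCast_self, ofAdd_zero, map_one]

def lift {G : Type*} [Group G] (g : ι → G) (hg : ∀ i, g i ^ n i = 1) :
    CyclicFreeProduct n →* G :=
  CoprodI.lift fun i => zmodPowersHom (n i) (g i) (hg i)

lemma lift_gen {G : Type*} [Group G] {g : ι → G} (hg : ∀ i, g i ^ n i = 1) (i : ι) :
    lift g hg (gen i) = g i := by
  simpa [lift, gen] using zmodPowersHom_ofAdd_intCast (hg i) 1

end CyclicFreeProduct

lemma Subgroup.normal_of_le_center {G : Type*} [Group G] {H : Subgroup G}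
    (hH : H ≤ Subgroup.center G) : H.Normal :=
  ⟨fun n hn g => by rwa [Subgroup.mem_center_iff.1 (hH hn) g, mul_inv_cancel_right]⟩

lemma zpow_eq_one_or_self {G : Type*} [Group G] {c : G} (hc : c ^ 2 = 1) (k : ℤ) :
    c ^ k = 1 ∨ c ^ k = c := by
  rcases Int.even_or_odd' k with ⟨m, rfl | rfl⟩
  · simp [zpow_mul, hc]
  · simp [zpow_add, zpow_mul, hc]

lemma exists_abs_add_two_mul_mul_lt {a c : ℤ} (hc : c ≠ 0) (h : Odd (a + c)) :
    ∃ k : ℤ, |a + 2 * k * c| < |c| := by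
  -- `a + 2kc` will be `(a + |c|) % (2|c|) - |c| ∈ [-|c|, |c|)`, and it is not `-|c|` by parity.
  set q := (a + |c|) / (2 * |c|)
  have hpos : 0 < |c| := abs_pos.2 hc
  have hr0 := Int.emod_nonneg (a + |c|) (by omega : 2 * |c| ≠ 0)
  have hr := Int.emod_lt_of_pos (a + |c|) (by omega : 0 < 2 * |c|)
  rw [Int.emod_def, mul_assoc] at hr0 hr
  refine ⟨-(q * c.sign), abs_lt.2 ?_⟩
  rw [show a + 2 * -(q * c.sign) * c = a - 2 * (|c| * q) by
    rw [← Int.sign_mul_self_eq_abs]; ring]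
  obtain ⟨m, hm⟩ := h
  generalize |c| * q = t at *
  rcases abs_choice c with hc' | hc' <;> constructor <;> omega

lemma V_sq : V ^ 2 = -1 := by decide

lemma V_pow_four : V ^ 4 = 1 := by decide

lemma V_sq_mul_T : V ^ 2 * T = T * V ^ 2 := by decide

lemma T_eq_T_sq : T = ModularGroup.T ^ 2 := by decide

lemma coe_T_zpow (k : ℤ) : ((T ^ k : SL2Z) : Matrix (Fin 2) (Fin 2) ℤ) = !![1, 2 * k; 0, 1] := by
  rw [T_eq_T_sq, ← zpow_natCast, ← zpow_mul, ModularGroup.coe_T_zpow, Nat.cast_ofNat]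

lemma V_mul_T_zpow_mul_apply_one_zero (A : SL2Z) (k : ℤ) :
    (V * T ^ k * A) 1 0 = A 0 0 + 2 * k * A 1 0 := by
  rw [Matrix.SpecialLinearGroup.coe_mul, Matrix.SpecialLinearGroup.coe_mul, coe_T_zpow]
  simp [V, Matrix.mul_apply, Fin.sum_univ_two]

lemma odd_add_of_mem {A : SL2Z} (hA : A ∈ GammaV2) : Odd (A 0 0 + A 1 0) := by
  obtain ⟨hab, hcd⟩ := hA
  have hdet : Odd (A 0 0 * A 1 1 - A 0 1 * A 1 0) := by
    rw [← Matrix.det_fin_two, A.det_coe]; exact odd_one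
  simp only [← Int.not_even_iff_odd, Int.even_add, Int.even_sub, Int.even_mul] at hab hcd hdet ⊢
  tauto

lemma mem_of_apply_one_zero_eq_zero {K : Subgroup SL2Z} (hV : V ∈ K) (hT : T ∈ K) {A : SL2Z}
    (hA : A ∈ GammaV2) (hc : A 1 0 = 0) : A ∈ K := by
  have had : A 0 0 * A 1 1 = 1 := by
    simpa [hc] using (Matrix.det_fin_two (A : Matrix (Fin 2) (Fin 2) ℤ)).symm.trans A.det_coe
  obtain ⟨m, hm⟩ : Even (A 0 1) := by
    rcases Int.eq_one_or_neg_one_of_mul_eq_one' had with ⟨ha, -⟩ | ⟨ha, -⟩ <;>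
      simpa [ha] using hA.1
  rcases Int.eq_one_or_neg_one_of_mul_eq_one' had with ⟨ha, hd⟩ | ⟨ha, hd⟩
  · have : A = T ^ m := by
      ext i j; fin_cases i <;> fin_cases j <;> simp [coe_T_zpow, ha, hd, hc, hm, two_mul]
    exact this ▸ zpow_mem hT m
  · have : A = V ^ 2 * T ^ (-m) := by
      rw [V_sq, neg_one_mul]
      ext i j; fin_cases i <;> fin_cases j <;> simp [coe_T_zpow, ha, hd, hc, hm, two_mul]
    exact this ▸ mul_mem (pow_mem hV 2) (zpow_mem hT _)

theorem GammaV2_le_of_V_mem_of_T_mem {K : Subgroup SL2Z} (hV : V ∈ K) (hT : T ∈ K) :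
    GammaV2 ≤ K := by
  intro A hA
  induction h : (A 1 0).natAbs using Nat.strong_induction_on generalizing A with
  | _ n ih =>
    by_cases hc : A 1 0 = 0
    · exact mem_of_apply_one_zero_eq_zero hV hT hA hc
    obtain ⟨k, hk⟩ := exists_abs_add_two_mul_mul_lt hc (odd_add_of_mem hA)
    have hlt : ((V * T ^ k * A) 1 0).natAbs < n := by
      rw [← h, V_mul_T_zpow_mul_apply_one_zero]
      rw [Int.abs_eq_natAbs, Int.abs_eq_natAbs] at hk
      exact_mod_cast hk
    have hB := ih _ hlt (mul_mem (mul_mem V_mem (zpow_mem T_mem k)) hA) rfl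
    simpa [mul_assoc] using mul_mem (zpow_mem hT (-k)) (mul_mem (inv_mem hV) hB)

lemma normSq_V_smul_lt_one {z : ℍ} (hz : 1 < Complex.normSq z) :
    Complex.normSq ↑(V • z) < 1 :=
  ModularGroup.normSq_S_smul_lt_one hz

lemma one_lt_normSq_T_zpow_smul {z : ℍ} (hz : Complex.normSq z < 1) {k : ℤ} (hk : k ≠ 0) :
    1 < Complex.normSq ↑(T ^ k • z) := by
  have hre : (T ^ k • z).re = z.re + 2 * k := by
    rw [T_eq_T_sq, ← zpow_natCast, ← zpow_mul, ModularGroup.re_T_zpow_smul]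
    push_cast; ring
  rw [Complex.normSq_apply] at hz ⊢
  change 1 < (T ^ k • z).re * (T ^ k • z).re + (T ^ k • z).im * (T ^ k • z).im
  change z.re * z.re + z.im * z.im < 1 at hz
  rw [hre]
  have hx : z.re * z.re < 1 := by nlinarith [mul_self_nonneg z.im]
  have hx' : 1 < |z.re + 2 * k| := by
    rcases hk.lt_or_gt with hk | hk
    · have : (k : ℝ) ≤ -1 := by exact_mod_cast Int.le_sub_one_of_lt hk
      rw [abs_of_neg (by nlinarith)]
      nlinarith
    · have : (1 : ℝ) ≤ k := by exact_mod_cast hk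
      rw [abs_of_pos (by nlinarith)]
      nlinarith
  nlinarith [abs_mul_abs_self (z.re + 2 * k), mul_self_nonneg (T ^ k • z).im]

noncomputable abbrev moebius : SL2Z →* Equiv.Perm ℍ := MulAction.toPermHom SL2Z ℍ

lemma moebius_V_sq : moebius V ^ 2 = 1 := by
  rw [← map_pow, V_sq]
  exact Equiv.ext fun z => (ModularGroup.SL_neg_smul 1 z).trans (one_smul _ z)

lemma moebius_V_zpow_of_odd {k : ℤ} (hk : Odd k) : moebius (V ^ k) = moebius V := by
  obtain ⟨m, rfl⟩ := hk
  rw [map_zpow, zpow_add_one, zpow_mul, zpow_ofNat, moebius_V_sq, one_zpow, one_mul]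

lemma moebius_pow_eq_one : ∀ i, moebius (![V, T] i) ^ (![2, 0] i) = 1 :=
  Fin.forall_fin_two.2 ⟨moebius_V_sq, pow_zero _⟩

lemma injective_lift_moebius :
    Function.Injective (CyclicFreeProduct.lift _ moebius_pow_eq_one) := by
  have hz₀ : Complex.normSq (Complex.I / 2) < 1 := by norm_num [Complex.normSq_apply]
  refine CoprodI.lift_injective_of_ping_pong _ (Or.inr ⟨1, ?_⟩)
    ![{z : ℍ | Complex.normSq z < 1}, {z | 1 < Complex.normSq z}] ?_ ?_ ?_
  · exact (Cardinal.natCast_lt_aleph0 (n := 3)).le.trans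
      (Cardinal.infinite_iff.1 (inferInstanceAs (Infinite (Multiplicative ℤ))))
  · refine Fin.forall_fin_two.2 ⟨⟨⟨Complex.I / 2, by simp⟩, hz₀⟩, ?_⟩
    exact ⟨T ^ (1 : ℤ) • ⟨Complex.I / 2, by simp⟩, one_lt_normSq_T_zpow_smul hz₀ one_ne_zero⟩
  · simp only [Pairwise, Fin.forall_fin_two, Function.onFun, Matrix.cons_val_zero,
      Matrix.cons_val_one, Set.disjoint_left, Set.mem_ofPred_eq]
    exact ⟨⟨absurd rfl, fun _ _ h₀ h₁ => lt_asymm h₀ h₁⟩, fun _ _ h₁ h₀ => lt_asymm h₀ h₁,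
      absurd rfl⟩
  · simp only [Pairwise, Fin.forall_fin_two]
    refine ⟨⟨absurd rfl, fun _ h hh => ?_⟩, fun _ h hh => ?_, absurd rfl⟩
    all_goals
      obtain ⟨k, rfl⟩ := Multiplicative.ofAdd.surjective.comp ZMod.intCast_surjective h
      simp only [Function.comp_apply, zmodPowersHom_ofAdd_intCast, ← map_zpow,
        Set.smul_set_subset_iff, Ne, ofAdd_eq_one] at hh ⊢
      intro z hz
    · change ¬(k : ZMod 2) = 0 at hh
      rw [ZMod.intCast_zmod_eq_zero_iff_dvd, Nat.cast_ofNat, ← even_iff_two_dvd,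
        Int.not_even_iff_odd] at hh
      change moebius (V ^ k) • z ∈ {z : ℍ | Complex.normSq z < 1}
      rw [moebius_V_zpow_of_odd hh]
      exact normSq_V_smul_lt_one hz
    · exact one_lt_normSq_T_zpow_smul hz hh

lemma gammaRels_lift_eq_one {G : Type*} [Group G] {g : Fin 2 → G} (h4 : g 0 ^ 4 = 1)
    (hc : g 0 ^ 2 * g 1 = g 1 * g 0 ^ 2) : ∀ r ∈ gammaRels, FreeGroup.lift g r = 1 := by
  rintro r (rfl | rfl)
  · simpa using h4
  · simp [hc]

namespace GammaV2

local notation "P" => PresentedGroup gammaRels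

open PresentedGroup (of)

lemma of_zero_pow_four : (of 0 : P) ^ 4 = 1 := by
  simpa [PresentedGroup.of] using PresentedGroup.one_of_mem (rels := gammaRels) (Or.inl rfl)

lemma of_zero_sq_mul_of_one : (of 0 : P) ^ 2 * of 1 = of 1 * of 0 ^ 2 := by
  simpa [PresentedGroup.of, mul_inv_eq_one, mul_inv_eq_iff_eq_mul] using
    PresentedGroup.one_of_mem (rels := gammaRels) (Or.inr rfl)

lemma of_zero_sq_mem_center : (of 0 : P) ^ 2 ∈ Subgroup.center P := by
  suffices Subgroup.centralizer {(of 0 : P) ^ 2} = ⊤ from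
    Subgroup.centralizer_eq_top_iff_subset.1 this rfl
  rw [eq_top_iff, ← PresentedGroup.closure_range_of, Subgroup.closure_le]
  rintro _ ⟨j, rfl⟩
  rw [SetLike.mem_coe, Subgroup.mem_centralizer_singleton_iff]
  fin_cases j
  · exact (pow_mul_comm' _ 2).symm
  · exact of_zero_sq_mul_of_one.symm

instance : (Subgroup.zpowers ((of 0 : P) ^ 2)).Normal :=
  Subgroup.normal_of_le_center (Subgroup.zpowers_le.2 of_zero_sq_mem_center)

lemma gens_mem : ∀ j, ![V, T] j ∈ GammaV2 := Fin.forall_fin_two.2 ⟨V_mem, T_mem⟩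

lemma gammaRels_lift_VT_eq_one :
    ∀ r ∈ gammaRels, FreeGroup.lift (fun j => (⟨![V, T] j, gens_mem j⟩ : GammaV2)) r = 1 :=
  gammaRels_lift_eq_one (Subtype.ext (by simpa using V_pow_four))
    (Subtype.ext (by simpa using V_sq_mul_T))

def presentationHom : P →* GammaV2 := PresentedGroup.toGroup gammaRels_lift_VT_eq_one

lemma presentationHom_of (j : Fin 2) : presentationHom (of j) = ⟨![V, T] j, gens_mem j⟩ :=
  PresentedGroup.toGroup.of _

lemma gammaRels_lift_gen_eq_one :
    ∀ r ∈ gammaRels, FreeGroup.lift (CyclicFreeProduct.gen (n := ![2, 0])) r = 1 :=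
  have h : CyclicFreeProduct.gen (n := ![2, 0]) 0 ^ 2 = 1 := CyclicFreeProduct.gen_pow_eq_one 0
  gammaRels_lift_eq_one (by rw [show 4 = 2 * 2 from rfl, pow_mul, h, one_pow])
    (by rw [h, one_mul, mul_one])

def toCyclicFreeProduct : P →* CyclicFreeProduct ![2, 0] :=
  PresentedGroup.toGroup gammaRels_lift_gen_eq_one

lemma toCyclicFreeProduct_of (j : Fin 2) :
    toCyclicFreeProduct (of j) = CyclicFreeProduct.gen j :=
  PresentedGroup.toGroup.of _

noncomputable def ofCyclicFreeProduct :
    CyclicFreeProduct ![2, 0] →* P ⧸ Subgroup.zpowers ((of 0 : P) ^ 2) :=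
  CyclicFreeProduct.lift (fun j => (of j : P)) <| Fin.forall_fin_two.2
    ⟨(QuotientGroup.eq_one_iff _).2 (Subgroup.mem_zpowers _), pow_zero _⟩

lemma ofCyclicFreeProduct_comp_toCyclicFreeProduct :
    ofCyclicFreeProduct.comp toCyclicFreeProduct = QuotientGroup.mk' _ :=
  PresentedGroup.ext fun j => by
    simp [toCyclicFreeProduct_of, ofCyclicFreeProduct, CyclicFreeProduct.lift_gen]

lemma ker_toCyclicFreeProduct_le :
    toCyclicFreeProduct.ker ≤ Subgroup.zpowers ((of 0 : P) ^ 2) :=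
  calc toCyclicFreeProduct.ker ≤ (ofCyclicFreeProduct.comp toCyclicFreeProduct).ker :=
        toCyclicFreeProduct.ker_le_comap ofCyclicFreeProduct.ker
    _ = _ := by rw [ofCyclicFreeProduct_comp_toCyclicFreeProduct, QuotientGroup.ker_mk']

lemma moebius_comp_presentationHom :
    moebius.comp (GammaV2.subtype.comp presentationHom) =
      (CyclicFreeProduct.lift _ moebius_pow_eq_one).comp toCyclicFreeProduct :=
  PresentedGroup.ext fun j => by
    simp [presentationHom_of, toCyclicFreeProduct_of, CyclicFreeProduct.lift_gen]

lemma ker_presentationHom_le : presentationHom.ker ≤ toCyclicFreeProduct.ker := by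
  rw [← MonoidHom.ker_comp_of_injective _ _ injective_lift_moebius,
    ← moebius_comp_presentationHom]
  exact presentationHom.ker_le_comap (moebius.comp GammaV2.subtype).ker

theorem presentationHom_injective : Function.Injective presentationHom := by
  refine (injective_iff_map_eq_one _).2 fun g hg => ?_
  obtain ⟨k, rfl⟩ := Subgroup.mem_zpowers_iff.1
    (ker_toCyclicFreeProduct_le (ker_presentationHom_le hg))
  have hsq : ((of 0 : P) ^ 2) ^ 2 = 1 := by rw [← pow_mul, of_zero_pow_four]
  refine (zpow_eq_one_or_self hsq k).resolve_right fun h => ?_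
  rw [h, map_pow, presentationHom_of] at hg
  exact (by rw [V_sq]; decide : V ^ 2 ≠ 1) (congrArg Subtype.val hg)

theorem presentationHom_surjective : Function.Surjective presentationHom := fun A => by
  obtain ⟨g, hg⟩ := GammaV2_le_of_V_mem_of_T_mem
    (K := (GammaV2.subtype.comp presentationHom).range)
    ⟨of 0, congrArg Subtype.val (presentationHom_of 0)⟩
    ⟨of 1, congrArg Subtype.val (presentationHom_of 1)⟩ A.2
  exact ⟨g, Subtype.ext hg⟩

end GammaV2

/-- `Γ_V(2)` admits the presentation `⟨v, t | v⁴ = 1, v²·t·v⁻²·t⁻¹ = 1⟩`: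
the homomorphism from the presented group to `Γ_V(2)` sending `v` to `V` and `t` to `T`
is a group isomorphism. -/
theorem gammaV2_presentation :
    ∃ e : PresentedGroup gammaRels ≃* GammaV2,
      e (PresentedGroup.of 0) = ⟨V, V_mem⟩ ∧ e (PresentedGroup.of 1) = ⟨T, T_mem⟩ :=
  ⟨.ofBijective _ ⟨GammaV2.presentationHom_injective, GammaV2.presentationHom_surjective⟩,
    GammaV2.presentationHom_of 0, GammaV2.presentationHom_of 1⟩
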